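/- Let G be a connected cograph. Then G is monopolar if and only if G contains none of the following four graphs as an induced subgraph: J1 = C4 ⊕ K1 (the 5-wheel), J2 = K1 ⊕ (P3 ∪ K2), J3 = K2 ⊕ 2K2, J4 = (K2 ∪ K1) ⊕ (K2 ∪ K1). -/

import Mathlib

open SimpleGraph

/-- The disjoint union `G ∪ H` of two vertex-disjoint graphs. -/
def gUnion {α β : Type*} (G : SimpleGraph α) (H : SimpleGraph β) : SimpleGraph (α ⊕ β) where
  Adj x y :=
    match x, y with
    | Sum.inl a, Sum.inl b => G.Adj a b
    | Sum.inr a, Sum.inr b => H.Adj a b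
    | _, _ => False
  symm := by constructor; rintro (a | a) (b | b) h
             · exact G.adj_symm h
             · exact h.elim
             · exact h.elim
             · exact H.adj_symm h
  loopless := by constructor; rintro (a | a) h
                 · exact G.irrefl h
                 · exact H.irrefl h

/-- The join `G ⊕ H` of two vertex-disjoint graphs: disjoint union plus all edges across. -/
def gJoin {α β : Type*} (G : SimpleGraph α) (H : SimpleGraph β) : SimpleGraph (α ⊕ β) where
  Adj x y :=
    match x, y with
    | Sum.inl a, Sum.inl b => G.Adj a b
    | Sum.inr a, Sum.inr b => H.Adj a b
    | _, _ => True
  symm := by constructor; rintro (a | a) (b | b) h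
             · exact G.adj_symm h
             · trivial
             · trivial
             · exact H.adj_symm h
  loopless := by constructor; rintro (a | a) h
                 · exact G.irrefl h
                 · exact H.irrefl h

/-- The complete graph `Kₙ`. -/
def KG (n : ℕ) : SimpleGraph (Fin n) := ⊤

/-- The edgeless graph `nK₁` on `n` vertices. -/
def EG (n : ℕ) : SimpleGraph (Fin n) := ⊥

/-- `G` contains `H`, i.e. `H` is isomorphic to an induced subgraph of `G`. -/
def Contains {α β : Type*} (G : SimpleGraph α) (H : SimpleGraph β) : Prop :=
  Nonempty (H ↪g G)

/-- A cograph is a `P₄`-free graph. -/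
def IsCograph {α : Type*} (G : SimpleGraph α) : Prop :=
  ¬ Contains G (pathGraph 4)

/-- `G` is partitionable: its vertex set splits into a part inducing a triangle-free
graph and a part inducing a `P₃`-free graph. -/
def Partitionable {α : Type*} (G : SimpleGraph α) : Prop :=
  ∃ A : Set α, (G.induce A).CliqueFree 3 ∧ ¬ Contains (G.induce Aᶜ) (pathGraph 3)

/-- `G` is monopolar: its vertex set splits into an independent set and a part
inducing a `P₃`-free graph. -/
def Monopolar {α : Type*} (G : SimpleGraph α) : Prop :=
  ∃ A : Set α, (G.induce A).CliqueFree 2 ∧ ¬ Contains (G.induce Aᶜ) (pathGraph 3)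

/-- `G` is (1,2)-partitionable: its vertex set can be partitioned into at most one
clique and at most two independent sets (equivalently, covered by them). -/
def OneTwoPartitionable {α : Type*} (G : SimpleGraph α) : Prop :=
  ∃ C S₁ S₂ : Set α, C ∪ S₁ ∪ S₂ = Set.univ ∧ G.IsClique C ∧
    (G.induce S₁).CliqueFree 2 ∧ (G.induce S₂).CliqueFree 2

/-- A threshold graph is a `(2K₂, C₄, P₄)`-free graph. -/
def IsThreshold {α : Type*} (G : SimpleGraph α) : Prop :=
  ¬ Contains G (gUnion (KG 2) (KG 2)) ∧ ¬ Contains G (cycleGraph 4) ∧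
    ¬ Contains G (pathGraph 4)

/-- The diamond `K₂ ⊕ 2K₁`. -/
def diamond := gJoin (KG 2) (EG 2)

/-- The paw `K₁ ⊕ (K₁ ∪ K₂)`. -/
def paw := gJoin (KG 1) (gUnion (KG 1) (KG 2))

/-- The butterfly `K₁ ⊕ 2K₂`. -/
def butterfly := gJoin (KG 1) (gUnion (KG 2) (KG 2))

def twoK2 := gUnion (KG 2) (KG 2)

def twoK3 := gUnion (KG 3) (KG 3)

def K2uK1 := gUnion (KG 2) (KG 1)


def J1 := gJoin (cycleGraph 4) (KG 1)
def J2 := gJoin (KG 1) (gUnion (pathGraph 3) (KG 2))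
def J3 := gJoin (KG 2) twoK2
def J4 := gJoin K2uK1 K2uK1

/-!
Monopolarity passes to induced subgraphs, and none of `J1`, …, `J4` is monopolar (a finite check).
Conversely, by Seinsche's theorem the vertex set of a cograph with at least two vertices splits into
two nonempty parts with either no edges or all edges between them; disjoint unions are handled by
induction, and a join `X ⊕ Y` directly:
* if neither side is a clique, a `P₃` on one side and a non-edge on the other form a `J1`
  (`C₄ ⊕ K₁ ≅ P₃ ⊕ 2K₁`), so both sides are `P₃`-free, and `J4` forces one of them to be
  independent;
* if `X` is a clique, `J1` makes `Y` `C₄`-free. If `Y` is also `2K₂`-free it is a threshold graph,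
  a clique plus an independent set, and that independent set works. Otherwise `J3` forces `X` to be
  a single vertex and `Y` to be `P₃`-free, because in a cograph a `2K₂` and a `P₃` give either a
  common neighbour of the `2K₂` (hence `J3`) or an induced `P₃ ∪ K₂` (hence `J2`).
-/

section

variable {α β γ : Type*} {G : SimpleGraph α} {H : SimpleGraph β} {K : SimpleGraph γ}
  {s t X Y : Set α} {a b c d v : α}

@[simp] lemma KG_adj {n : ℕ} {i j : Fin n} : (KG n).Adj i j ↔ i ≠ j := .rfl
@[simp] lemma EG_not_adj {n : ℕ} {i j : Fin n} : ¬(EG n).Adj i j := id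

instance [DecidableRel H.Adj] [DecidableRel K.Adj] : DecidableRel (gJoin H K).Adj
  | .inl a, .inl b => inferInstanceAs (Decidable (H.Adj a b))
  | .inl _, .inr _ => .isTrue trivial
  | .inr _, .inl _ => .isTrue trivial
  | .inr a, .inr b => inferInstanceAs (Decidable (K.Adj a b))

instance [DecidableRel H.Adj] [DecidableRel K.Adj] : DecidableRel (gUnion H K).Adj
  | .inl a, .inl b => inferInstanceAs (Decidable (H.Adj a b))
  | .inl _, .inr _ => .isFalse id
  | .inr _, .inl _ => .isFalse id
  | .inr a, .inr b => inferInstanceAs (Decidable (K.Adj a b))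

instance {n : ℕ} : DecidableRel (KG n).Adj := fun i j => inferInstanceAs (Decidable (i ≠ j))

instance {n : ℕ} : DecidableRel (EG n).Adj := fun _ _ => .isFalse id

instance {n : ℕ} : DecidableRel (pathGraph n).Adj :=
  fun _ _ => decidable_of_iff _ pathGraph_adj.symm

def ContainsOn (G : SimpleGraph α) (s : Set α) (H : SimpleGraph β) : Prop :=
  ∃ f : H ↪g G, Set.range f ⊆ s

lemma ContainsOn.mono (h : ContainsOn G s H) (hst : s ⊆ t) : ContainsOn G t H :=
  let ⟨f, hf⟩ := h; ⟨f, hf.trans hst⟩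

lemma ContainsOn.contains (h : ContainsOn G s H) : Contains G H :=
  let ⟨f, _⟩ := h; ⟨f⟩

lemma ContainsOn.comp (h : ContainsOn G s H) (e : K ↪g H) : ContainsOn G s K :=
  let ⟨f, hf⟩ := h; ⟨f.comp e, (Set.range_comp_subset_range e f).trans hf⟩

lemma contains_induce_iff : Contains (G.induce s) H ↔ ContainsOn G s H := by
  constructor
  · rintro ⟨f⟩
    exact ⟨(Embedding.induce s).comp f, by rintro _ ⟨b, rfl⟩; exact (f b).2⟩
  · rintro ⟨f, hf⟩
    exact ⟨⟨⟨fun b => ⟨f b, hf ⟨b, rfl⟩⟩, fun a b h => f.injective (congrArg Subtype.val h)⟩,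
      f.map_adj_iff⟩⟩

lemma ContainsOn.join (hH : ContainsOn G X H) (hK : ContainsOn G Y K)
    (hXY : G.IsCompleteBetween X Y) : ContainsOn G (X ∪ Y) (gJoin H K) := by
  obtain ⟨f, hf⟩ := hH
  obtain ⟨g, hg⟩ := hK
  have hfg (a : β) (b : γ) : G.Adj (f a) (g b) := hXY (hf ⟨a, rfl⟩) (hg ⟨b, rfl⟩)
  refine ⟨⟨⟨Sum.elim f g, ?_⟩, ?_⟩, ?_⟩
  · rintro (a | a) (b | b) h
    exacts [congrArg _ (f.injective h), ((hfg a b).ne h).elim, ((hfg b a).ne h.symm).elim,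
      congrArg _ (g.injective h)]
  · rintro (a | a) (b | b)
    exacts [f.map_adj_iff, iff_of_true (hfg a b) trivial, iff_of_true (hfg b a).symm trivial,
      g.map_adj_iff]
  · rintro _ ⟨a | a, rfl⟩
    exacts [Or.inl (hf ⟨a, rfl⟩), Or.inr (hg ⟨a, rfl⟩)]

lemma ContainsOn.union (hH : ContainsOn G X H) (hK : ContainsOn G Y K)
    (hXY : Gᶜ.IsCompleteBetween X Y) : ContainsOn G (X ∪ Y) (gUnion H K) := by
  obtain ⟨f, hf⟩ := hH
  obtain ⟨g, hg⟩ := hK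
  have hfg (a : β) (b : γ) : Gᶜ.Adj (f a) (g b) := hXY (hf ⟨a, rfl⟩) (hg ⟨b, rfl⟩)
  refine ⟨⟨⟨Sum.elim f g, ?_⟩, ?_⟩, ?_⟩
  · rintro (a | a) (b | b) h
    exacts [congrArg _ (f.injective h), ((hfg a b).ne h).elim, ((hfg b a).ne h.symm).elim,
      congrArg _ (g.injective h)]
  · rintro (a | a) (b | b)
    exacts [f.map_adj_iff, iff_of_false (hfg a b).2 id,
      iff_of_false (fun h => (hfg b a).2 h.symm) id, g.map_adj_iff]
  · rintro _ ⟨a | a, rfl⟩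
    exacts [Or.inl (hf ⟨a, rfl⟩), Or.inr (hg ⟨a, rfl⟩)]

lemma containsOn_of_injective (f : β → α) (hinj : f.Injective)
    (hadj : ∀ i j, G.Adj (f i) (f j) ↔ H.Adj i j) (hs : ∀ i, f i ∈ s) : ContainsOn G s H :=
  ⟨⟨⟨f, hinj⟩, hadj _ _⟩, Set.range_subset_iff.2 hs⟩

lemma containsOn_KG_one (ha : a ∈ s) : ContainsOn G s (KG 1) :=
  containsOn_of_injective (fun _ => a) (fun i j _ => Subsingleton.elim i j)
    (fun i j => by simp [Subsingleton.elim i j]) fun _ => ha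

lemma containsOn_KG_two (ha : a ∈ s) (hb : b ∈ s) (hab : G.Adj a b) : ContainsOn G s (KG 2) := by
  refine containsOn_of_injective ![a, b] (fun i j h => ?_) (fun i j => ?_) fun i => ?_
  · fin_cases i <;> fin_cases j <;> simp_all [hab.ne, hab.ne.symm]
  · fin_cases i <;> fin_cases j <;> simp [hab, hab.symm]
  · fin_cases i <;> simpa

lemma containsOn_EG_two (ha : a ∈ s) (hb : b ∈ s) (hne : a ≠ b) (hab : ¬G.Adj a b) :
    ContainsOn G s (EG 2) := by
  refine containsOn_of_injective ![a, b] (fun i j h => ?_) (fun i j => ?_) fun i => ?_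
  · fin_cases i <;> fin_cases j <;> simp_all [hne.symm]
  · fin_cases i <;> fin_cases j <;> simp [hab, mt G.adj_symm hab]
  · fin_cases i <;> simpa

lemma containsOn_KG_two_of_not_isIndepSet (h : ¬G.IsIndepSet s) : ContainsOn G s (KG 2) := by
  obtain ⟨a, ha, b, hb, -, hab⟩ : ∃ a ∈ s, ∃ b ∈ s, a ≠ b ∧ G.Adj a b := by
    simpa [Set.Pairwise] using h
  exact containsOn_KG_two ha hb hab

lemma containsOn_EG_two_of_not_isClique (h : ¬G.IsClique s) : ContainsOn G s (EG 2) := by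
  obtain ⟨a, ha, b, hb, hne, hab⟩ : ∃ a ∈ s, ∃ b ∈ s, a ≠ b ∧ ¬G.Adj a b := by
    simpa [isClique_iff, Set.Pairwise] using h
  exact containsOn_EG_two ha hb hne hab

lemma containsOn_pathGraph_three_iff : ContainsOn G s (pathGraph 3) ↔
    ∃ a ∈ s, ∃ b ∈ s, ∃ c ∈ s, G.Adj a b ∧ G.Adj b c ∧ a ≠ c ∧ ¬G.Adj a c := by
  constructor
  · rintro ⟨f, hf⟩
    have hmem (i) : f i ∈ s := hf ⟨i, rfl⟩
    refine ⟨f 0, hmem 0, f 1, hmem 1, f 2, hmem 2, f.map_adj_iff.2 (by decide),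
      f.map_adj_iff.2 (by decide), f.injective.ne (by decide), fun h => ?_⟩
    exact absurd (f.map_adj_iff.1 h) (by decide)
  · rintro ⟨a, ha, b, hb, c, hc, hab, hbc, hac, hnac⟩
    refine containsOn_of_injective ![a, b, c] (fun i j h => ?_) (fun i j => ?_) fun i => ?_
    · fin_cases i <;> fin_cases j <;>
        simp_all [hab.ne, hab.ne.symm, hbc.ne, hbc.ne.symm, hac.symm]
    · fin_cases i <;> fin_cases j <;>
        simp [pathGraph_adj, hab, hbc, hab.symm, hbc.symm, hnac, mt G.adj_symm hnac]
    · fin_cases i <;> simpa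

lemma contains_pathGraph_four (hab : G.Adj a b) (hbc : G.Adj b c) (hcd : G.Adj c d)
    (hac : ¬G.Adj a c) (had : ¬G.Adj a d) (hbd : ¬G.Adj b d) (hac' : a ≠ c) (had' : a ≠ d)
    (hbd' : b ≠ d) : Contains G (pathGraph 4) := by
  refine (containsOn_of_injective (s := Set.univ) ![a, b, c, d] (fun i j h => ?_) (fun i j => ?_)
    fun _ => trivial).contains
  · fin_cases i <;> fin_cases j <;>
      simp_all [hab.ne, hab.ne.symm, hbc.ne, hbc.ne.symm, hcd.ne, hcd.ne.symm, hac'.symm,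
        had'.symm, hbd'.symm]
  · fin_cases i <;> fin_cases j <;>
      simp [pathGraph_adj, hab, hbc, hcd, hab.symm, hbc.symm, hcd.symm, hac, had, hbd,
        mt G.adj_symm hac, mt G.adj_symm had, mt G.adj_symm hbd]

def cycleGraphFourIsoJoin : cycleGraph 4 ≃g gJoin (EG 2) (EG 2) where
  toFun := ![.inl 0, .inr 0, .inl 1, .inr 1]
  invFun := Sum.elim ![0, 2] ![1, 3]
  left_inv := by decide
  right_inv := by decide
  map_rel_iff' {i j} := by revert i j; decide

namespace SimpleGraph

lemma IsCompleteBetween.mono {X' Y' : Set α} (h : G.IsCompleteBetween X Y) (hX : X' ⊆ X)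
    (hY : Y' ⊆ Y) : G.IsCompleteBetween X' Y' :=
  fun _ ha _ hb => h (hX ha) (hY hb)

lemma IsCompleteBetween.mem_left_of_not_adj (h : G.IsCompleteBetween X Y) (ha : a ∈ X)
    (hb : b ∈ X ∪ Y) (hab : ¬G.Adj a b) : b ∈ X :=
  hb.resolve_right fun hb => hab (h ha hb)

lemma IsClique.union_of_isCompleteBetween (hX : G.IsClique X) (hY : G.IsClique Y)
    (hXY : G.IsCompleteBetween X Y) : G.IsClique (X ∪ Y) :=
  Set.pairwise_union.2 ⟨hX, hY, fun _ ha _ hb _ => ⟨hXY ha hb, (hXY ha hb).symm⟩⟩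

lemma IsClique.not_containsOn_pathGraph_three (h : G.IsClique s) :
    ¬ContainsOn G s (pathGraph 3) := by
  rw [containsOn_pathGraph_three_iff]
  rintro ⟨a, ha, -, -, c, hc, -, -, hac, hnac⟩
  exact hnac (h ha hc hac)

end SimpleGraph

lemma adj_of_not_containsOn_pathGraph_three (h : ¬ContainsOn G s (pathGraph 3)) (ha : a ∈ s)
    (hb : b ∈ s) (hc : c ∈ s) (hab : G.Adj a b) (hbc : G.Adj b c) (hac : a ≠ c) : G.Adj a c := by
  by_contra hnac
  exact h (containsOn_pathGraph_three_iff.2 ⟨a, ha, b, hb, c, hc, hab, hbc, hac, hnac⟩)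

lemma containsOn_pathGraph_three_union (hXY : Gᶜ.IsCompleteBetween X Y) :
    ContainsOn G (X ∪ Y) (pathGraph 3) ↔
      ContainsOn G X (pathGraph 3) ∨ ContainsOn G Y (pathGraph 3) := by
  refine ⟨fun h => ?_,
    fun h => h.elim (·.mono Set.subset_union_left) (·.mono Set.subset_union_right)⟩
  obtain ⟨a, ha, b, hb, c, hc, hab, hbc, hac, hnac⟩ := containsOn_pathGraph_three_iff.1 h
  have hside {Z W : Set α} (hZW : Gᶜ.IsCompleteBetween Z W) (hb : b ∈ Z)
      (ha : a ∈ Z ∪ W) (hc : c ∈ Z ∪ W) : ContainsOn G Z (pathGraph 3) :=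
    containsOn_pathGraph_three_iff.2 ⟨a, hZW.mem_left_of_not_adj hb ha (·.2 hab.symm), b, hb, c,
      hZW.mem_left_of_not_adj hb hc (·.2 hbc), hab, hbc, hac, hnac⟩
  rcases hb with hb | hb
  · exact .inl (hside hXY hb ha hc)
  · rw [Set.union_comm] at ha hc
    exact .inr (hside hXY.symm hb ha hc)

lemma containsOn_K2uK1 (hP3 : ¬ContainsOn G s (pathGraph 3)) (hedge : ¬G.IsIndepSet s)
    (hnonedge : ¬G.IsClique s) : ContainsOn G s K2uK1 := by
  obtain ⟨e₁, he₁, e₂, he₂, -, he⟩ : ∃ a ∈ s, ∃ b ∈ s, a ≠ b ∧ G.Adj a b := by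
    simpa [Set.Pairwise] using hedge
  have hfar : ∃ c ∈ s, c ≠ e₁ ∧ ¬G.Adj c e₁ := by
    by_contra! hnear
    obtain ⟨a, ha, b, hb, hne, hab⟩ : ∃ a ∈ s, ∃ b ∈ s, a ≠ b ∧ ¬G.Adj a b := by
      simpa [isClique_iff, Set.Pairwise] using hnonedge
    apply hab
    obtain rfl | hae := eq_or_ne a e₁
    · exact (hnear b hb hne.symm).symm
    obtain rfl | hbe := eq_or_ne b e₁
    · exact hnear a ha hae
    exact adj_of_not_containsOn_pathGraph_three hP3 ha he₁ hb (hnear a ha hae)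
      (hnear b hb hbe).symm hne
  obtain ⟨c, hc, hce₁, hnce₁⟩ := hfar
  have hnce₂ : ¬G.Adj c e₂ := fun h =>
    hnce₁ (adj_of_not_containsOn_pathGraph_three hP3 hc he₂ he₁ h he.symm hce₁)
  have hsep : Gᶜ.IsCompleteBetween {e₁, e₂} {c} := by
    rintro _ (rfl | rfl) _ rfl
    exacts [⟨hce₁.symm, mt G.adj_symm hnce₁⟩,
      ⟨fun h => hnce₁ (h ▸ he.symm), mt G.adj_symm hnce₂⟩]
  refine ((containsOn_KG_two (s := {e₁, e₂}) (by simp) (by simp) he).union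
    (containsOn_KG_one (Set.mem_singleton c)) hsep).mono ?_
  simp [Set.insert_subset_iff, he₁, he₂, hc]

def MonopolarOn (G : SimpleGraph α) (s : Set α) : Prop :=
  ∃ A ⊆ s, G.IsIndepSet A ∧ ¬ContainsOn G (s \ A) (pathGraph 3)

lemma monopolar_iff_monopolarOn_univ : Monopolar G ↔ MonopolarOn G Set.univ := by
  simp only [Monopolar, MonopolarOn, contains_induce_iff, cliqueFree_two, Set.subset_univ,
    true_and, ← Set.compl_eq_univ_sdiff]
  refine exists_congr fun A => and_congr_left' ⟨fun h a ha b hb _ hab => ?_, fun h => ?_⟩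
  · exact (h ▸ hab : (⊥ : SimpleGraph A).Adj ⟨a, ha⟩ ⟨b, hb⟩)
  · ext ⟨a, ha⟩ ⟨b, hb⟩
    exact iff_of_false (fun hab : G.Adj a b => h ha hb hab.ne hab) id

lemma Monopolar.of_contains (hG : Monopolar G) (hH : Contains G H) : Monopolar H := by
  obtain ⟨f⟩ := hH
  rw [monopolar_iff_monopolarOn_univ] at hG ⊢
  obtain ⟨A, -, hA, hP3⟩ := hG
  refine ⟨f ⁻¹' A, Set.subset_univ _,
    fun a ha b hb hne => mt f.map_adj_iff.2 (hA ha hb (f.injective.ne hne)), ?_⟩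
  rintro ⟨g, hg⟩
  refine hP3 ⟨f.comp g, ?_⟩
  rintro _ ⟨i, rfl⟩
  exact ⟨trivial, (hg ⟨i, rfl⟩).2⟩

lemma monopolar_iff_exists_finset [Fintype α] [DecidableEq α] : Monopolar G ↔
    ∃ A : Finset α, (∀ a ∈ A, ∀ b ∈ A, ¬G.Adj a b) ∧
      ∀ a ∉ A, ∀ b ∉ A, ∀ c ∉ A, G.Adj a b → G.Adj b c → a ≠ c → G.Adj a c := by
  simp only [monopolar_iff_monopolarOn_univ, MonopolarOn, Set.subset_univ, true_and,
    containsOn_pathGraph_three_iff, Set.mem_sdiff, Set.mem_univ, not_exists, not_and, not_not]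
  constructor
  · rintro ⟨A, hA, hP3⟩
    refine ⟨(Set.toFinite A).toFinset, fun a ha b hb => ?_, by simpa using hP3⟩
    rw [Set.Finite.mem_toFinset] at ha hb
    obtain rfl | hne := eq_or_ne a b
    exacts [G.irrefl, hA ha hb hne]
  · rintro ⟨A, hA, hP3⟩
    exact ⟨A, fun a ha b hb _ => hA a ha b hb, by simpa using hP3⟩

section

set_option synthInstance.maxSize 2000

lemma not_monopolar_J1 : ¬Monopolar J1 := by
  rw [monopolar_iff_exists_finset]; unfold J1; decide

lemma not_monopolar_J2 : ¬Monopolar J2 := by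
  rw [monopolar_iff_exists_finset]; unfold J2; decide

lemma not_monopolar_J3 : ¬Monopolar J3 := by
  rw [monopolar_iff_exists_finset]; unfold J3 twoK2; decide

lemma not_monopolar_J4 : ¬Monopolar J4 := by
  rw [monopolar_iff_exists_finset]; unfold J4 K2uK1; decide

end

/-- `IsJoinSplit Gᶜ s X Y` says that `G[s]` is the disjoint union of `G[X]` and `G[Y]`. -/
structure IsJoinSplit (G : SimpleGraph α) (s X Y : Set α) : Prop where
  left_nonempty : X.Nonempty
  right_nonempty : Y.Nonempty
  union_eq : X ∪ Y = s
  isCompleteBetween : G.IsCompleteBetween X Y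

namespace IsJoinSplit

lemma symm (h : IsJoinSplit G s X Y) : IsJoinSplit G s Y X :=
  ⟨h.right_nonempty, h.left_nonempty, Set.union_comm Y X ▸ h.union_eq, h.isCompleteBetween.symm⟩

lemma nonempty (h : IsJoinSplit G s X Y) : s.Nonempty :=
  h.union_eq ▸ h.left_nonempty.mono Set.subset_union_left

lemma left_ssubset (h : IsJoinSplit G s X Y) : X ⊂ s := by
  rw [← h.union_eq, Set.ssubset_union_left_iff]
  obtain ⟨y, hy⟩ := h.right_nonempty
  exact fun hYX => h.isCompleteBetween.disjoint.notMem_of_mem_right hy (hYX hy)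

lemma right_ssubset (h : IsJoinSplit G s X Y) : Y ⊂ s :=
  h.symm.left_ssubset

lemma sdiff_left_subset (h : IsJoinSplit G s X Y) : s \ X ⊆ Y := by
  rw [← h.union_eq, Set.union_sdiff_left]
  exact Set.sdiff_subset

end IsJoinSplit

lemma IsCograph.compl (hG : IsCograph G) : IsCograph Gᶜ := by
  -- the complement of the path `0 1 2 3` is the path `2 0 3 1`
  rintro ⟨f⟩
  have hadj {i j : Fin 4} (hij : i ≠ j) : G.Adj (f i) (f j) ↔ ¬(pathGraph 4).Adj i j := by
    rw [← f.map_adj_iff, compl_adj, and_iff_right (f.injective.ne hij), not_not]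
  refine hG (contains_pathGraph_four (a := f 2) (b := f 0) (c := f 3) (d := f 1) ?_ ?_ ?_ ?_ ?_ ?_
    (f.injective.ne (by decide)) (f.injective.ne (by decide)) (f.injective.ne (by decide)))
  all_goals rw [hadj (by decide)]; decide

lemma IsCograph.exists_isJoinSplit_compl_insert_of_not_adj (hG : IsCograph G)
    (h : IsJoinSplit Gᶜ t X Y) (hv : v ∉ t) (ha : a ∈ X) (hva : ¬G.Adj v a) :
    ∃ X' Y', IsJoinSplit Gᶜ (insert v t) X' Y' := by
  have hXt : X ⊆ t := h.union_eq ▸ Set.subset_union_left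
  have hYt : Y ⊆ t := h.union_eq ▸ Set.subset_union_right
  by_cases hY : ∃ c ∈ Y, G.Adj v c
  · -- an edge `m w` leaving the non-neighbours `M` of `v` in `X` would give the path `m w v c`
    obtain ⟨c, hc, hvc⟩ := hY
    set M := {x ∈ X | ¬G.Adj v x}
    refine ⟨M, insert v t \ M, ⟨⟨a, ha, hva⟩, ⟨v, .inl rfl, fun hvM => hv (hXt hvM.1)⟩,
      Set.union_sdiff_cancel fun x hx => .inr (hXt hx.1), fun m hm w hw => ⟨?_, fun hmw => ?_⟩⟩⟩
    · rintro rfl; exact hw.2 hm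
    obtain rfl | hwt := hw.1
    · exact hm.2 hmw.symm
    rw [← h.union_eq] at hwt
    obtain hwX | hwY := hwt
    · have hvw : G.Adj v w := not_not.1 fun hvw => hw.2 ⟨hwX, hvw⟩
      exact hG (contains_pathGraph_four hmw hvw.symm hvc (mt G.adj_symm hm.2)
        (h.isCompleteBetween hm.1 hc).2
        (h.isCompleteBetween hwX hc).2 (fun hmv => hv (hmv ▸ hXt hm.1))
        (h.isCompleteBetween hm.1 hc).1 (h.isCompleteBetween hwX hc).1)
    · exact (h.isCompleteBetween hm.1 hwY).2 hmw
  · push Not at hY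
    refine ⟨insert v X, Y, ⟨Set.insert_nonempty v X, h.right_nonempty,
      by rw [Set.insert_union, h.union_eq], ?_⟩⟩
    rintro x (rfl | hx) y hy
    exacts [⟨fun hxy => hv (hxy ▸ hYt hy), hY y hy⟩, h.isCompleteBetween hx hy]

lemma IsCograph.exists_isJoinSplit_insert (hG : IsCograph G) (h : IsJoinSplit Gᶜ t X Y)
    (hv : v ∉ t) :
    ∃ X' Y', IsJoinSplit G (insert v t) X' Y' ∨ IsJoinSplit Gᶜ (insert v t) X' Y' := by
  by_cases hX : ∃ x ∈ X, ¬G.Adj v x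
  · obtain ⟨x, hx, hvx⟩ := hX
    obtain ⟨X', Y', h'⟩ := hG.exists_isJoinSplit_compl_insert_of_not_adj h hv hx hvx
    exact ⟨X', Y', .inr h'⟩
  by_cases hY : ∃ y ∈ Y, ¬G.Adj v y
  · obtain ⟨y, hy, hvy⟩ := hY
    obtain ⟨X', Y', h'⟩ := hG.exists_isJoinSplit_compl_insert_of_not_adj h.symm hv hy hvy
    exact ⟨X', Y', .inr h'⟩
  push Not at hX hY
  refine ⟨{v}, t, .inl ⟨Set.singleton_nonempty v, h.nonempty, Set.singleton_union, ?_⟩⟩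
  rintro _ rfl w hw
  rw [← h.union_eq] at hw
  exact hw.elim (hX w) (hY w)

theorem IsCograph.exists_isJoinSplit [Finite α] (hG : IsCograph G) (hs : s.Nontrivial) :
    ∃ X Y, IsJoinSplit G s X Y ∨ IsJoinSplit Gᶜ s X Y := by
  induction s using WellFoundedLT.induction with
  | _ s ih =>
  obtain ⟨v, hv⟩ := hs.nonempty
  obtain ⟨u, hu, huv⟩ := hs.exists_ne v
  have hsv : insert v (s \ {v}) = s := by rw [Set.insert_sdiff_singleton, Set.insert_eq_of_mem hv]
  rw [← hsv]
  by_cases ht : (s \ {v}).Subsingleton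
  · have hut : u ∈ s \ {v} := ⟨hu, huv⟩
    have hsplit (G' : SimpleGraph α) (hvu : G'.Adj v u) :
        IsJoinSplit G' (insert v (s \ {v})) {v} (s \ {v}) :=
      ⟨Set.singleton_nonempty v, ⟨u, hut⟩, Set.singleton_union, by
        rintro _ rfl w hw; rwa [ht hw hut]⟩
    by_cases hvu : G.Adj v u
    · exact ⟨_, _, .inl (hsplit G hvu)⟩
    · exact ⟨_, _, .inr (hsplit Gᶜ ⟨huv.symm, hvu⟩)⟩
  obtain ⟨X, Y, h | h⟩ := ih _ (Set.sdiff_singleton_ssubset.2 hv) (Set.not_subsingleton_iff.1 ht)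
  · rw [← compl_compl G] at h
    obtain ⟨X', Y', h'⟩ := hG.compl.exists_isJoinSplit_insert h (fun h => h.2 rfl)
    rw [compl_compl] at h'
    exact ⟨X', Y', h'.symm⟩
  · exact hG.exists_isJoinSplit_insert h (fun h => h.2 rfl)

theorem IsCograph.exists_isIndepSet_isClique_sdiff [Finite α] (hG : IsCograph G)
    (h2K2 : ¬ContainsOn G s twoK2) (hC4 : ¬ContainsOn G s (cycleGraph 4)) :
    ∃ I ⊆ s, G.IsIndepSet I ∧ G.IsClique (s \ I) := by
  induction s using WellFoundedLT.induction with
  | _ s ih =>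
  obtain hs | hs := s.subsingleton_or_nontrivial
  · exact ⟨∅, Set.empty_subset s, Set.pairwise_empty _, by simpa using hs.pairwise _⟩
  obtain ⟨X, Y, h | h⟩ := hG.exists_isJoinSplit hs
  · wlog hY : G.IsClique Y generalizing X Y
    · by_cases hX : G.IsClique X
      · exact this Y X h.symm hX
      refine absurd (((containsOn_EG_two_of_not_isClique hX).join
        (containsOn_EG_two_of_not_isClique hY) h.isCompleteBetween).comp
          cycleGraphFourIsoJoin.toEmbedding) ?_
      rwa [h.union_eq]
    have hXs := h.left_ssubset.subset
    obtain ⟨I, hIX, hI, hK⟩ := ih X h.left_ssubset (fun h' => h2K2 (h'.mono hXs))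
      (fun h' => hC4 (h'.mono hXs))
    refine ⟨I, hIX.trans hXs, hI, ?_⟩
    refine (hK.union_of_isCompleteBetween hY
      (h.isCompleteBetween.mono Set.sdiff_subset subset_rfl)).subset ?_
    rw [← h.union_eq, Set.union_sdiff_distrib]
    exact Set.union_subset_union_right _ Set.sdiff_subset
  · wlog hY : G.IsIndepSet Y generalizing X Y
    · by_cases hX : G.IsIndepSet X
      · exact this Y X h.symm hX
      refine absurd ((containsOn_KG_two_of_not_isIndepSet hX).union
        (containsOn_KG_two_of_not_isIndepSet hY) h.isCompleteBetween) ?_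
      rwa [h.union_eq]
    have hXs := h.left_ssubset.subset
    obtain ⟨I, hIX, hI, hK⟩ := ih X h.left_ssubset (fun h' => h2K2 (h'.mono hXs))
      (fun h' => hC4 (h'.mono hXs))
    refine ⟨I ∪ Y, h.union_eq ▸ Set.union_subset_union_left Y hIX, ?_, hK.subset ?_⟩
    · rw [← isClique_compl] at hI hY ⊢
      exact hI.union_of_isCompleteBetween hY (h.isCompleteBetween.mono hIX subset_rfl)
    · rw [← h.union_eq]
      rintro x ⟨hx, hxIY⟩
      exact ⟨hx.resolve_right (hxIY ∘ .inr), hxIY ∘ .inl⟩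

theorem IsCograph.exists_forall_adj_or_containsOn_gUnion [Finite α] (hG : IsCograph G)
    (f : twoK2 ↪g G) (hf : Set.range f ⊆ s) (hP3 : ContainsOn G s (pathGraph 3)) :
    (∃ t ∈ s, ∀ i, G.Adj t (f i)) ∨ ContainsOn G s (gUnion (pathGraph 3) (KG 2)) := by
  induction s using WellFoundedLT.induction with
  | _ s ih =>
  have hmem (i) : f i ∈ s := hf ⟨i, rfl⟩
  have hadj_inl : G.Adj (f (.inl 0)) (f (.inl 1)) :=
    f.map_adj_iff.2 (show (KG 2).Adj 0 1 by decide)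
  have hadj_inr : G.Adj (f (.inr 0)) (f (.inr 1)) :=
    f.map_adj_iff.2 (show (KG 2).Adj 0 1 by decide)
  have hnadj (i j) : ¬G.Adj (f (.inl i)) (f (.inr j)) := fun h => f.map_adj_iff.1 h
  have hs : s.Nontrivial := ⟨_, hmem (.inl 0), _, hmem (.inl 1), hadj_inl.ne⟩
  obtain ⟨X, Y, h | h⟩ := hG.exists_isJoinSplit hs
  · -- the complement of `2K₂` is connected, so `f` lands on one side of the join
    wlog h0 : f (.inl 0) ∈ X generalizing X Y
    · exact this Y X h.symm ((h.union_eq ▸ hmem _ : _ ∈ X ∪ Y).resolve_left h0)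
    have hinr (j) : f (.inr j) ∈ X :=
      h.isCompleteBetween.mem_left_of_not_adj h0 (h.union_eq ▸ hmem _) (hnadj 0 j)
    have hinl (i) : f (.inl i) ∈ X :=
      h.isCompleteBetween.mem_left_of_not_adj (hinr 0) (h.union_eq ▸ hmem _)
        (mt G.adj_symm (hnadj i 0))
    obtain ⟨t, ht⟩ := h.right_nonempty
    refine .inl ⟨t, h.union_eq ▸ .inr ht, ?_⟩
    rintro (i | j)
    exacts [(h.isCompleteBetween (hinl i) ht).symm, (h.isCompleteBetween (hinr j) ht).symm]
  · wlog hP3X : ContainsOn G X (pathGraph 3) generalizing X Y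
    · refine this Y X h.symm ?_
      rw [← h.union_eq, containsOn_pathGraph_three_union h.isCompleteBetween] at hP3
      exact hP3.resolve_left hP3X
    have hedge (a b : α) (hab : G.Adj a b) (ha : a ∈ Y) (hb : b ∈ s) :
        ContainsOn G s (gUnion (pathGraph 3) (KG 2)) := by
      have hb : b ∈ Y := h.isCompleteBetween.symm.mem_left_of_not_adj ha
        (Set.union_comm X Y ▸ h.union_eq ▸ hb) (·.2 hab)
      rw [← h.union_eq]
      exact hP3X.union (containsOn_KG_two ha hb hab) h.isCompleteBetween
    by_cases hl : f (.inl 0) ∈ Y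
    · exact .inr (hedge _ _ hadj_inl hl (hmem _))
    by_cases hr : f (.inr 0) ∈ Y
    · exact .inr (hedge _ _ hadj_inr hr (hmem _))
    have hfX : Set.range f ⊆ X := by
      have hX (i) (hi : f i ∉ Y) : f i ∈ X :=
        (h.union_eq ▸ hmem i : f i ∈ X ∪ Y).resolve_right hi
      have hl1 := h.isCompleteBetween.mem_left_of_not_adj (hX _ hl) (h.union_eq ▸ hmem (.inl 1))
        (·.2 hadj_inl)
      have hr1 := h.isCompleteBetween.mem_left_of_not_adj (hX _ hr) (h.union_eq ▸ hmem (.inr 1))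
        (·.2 hadj_inr)
      rintro _ ⟨i | i, rfl⟩ <;> fin_cases i
      exacts [hX _ hl, hl1, hX _ hr, hr1]
    exact (ih X h.left_ssubset hfX hP3X).imp
      (fun ⟨t, ht, hta⟩ => ⟨t, h.left_ssubset.subset ht, hta⟩) (·.mono h.left_ssubset.subset)

lemma MonopolarOn.union (hX : MonopolarOn G X) (hY : MonopolarOn G Y)
    (hXY : Gᶜ.IsCompleteBetween X Y) : MonopolarOn G (X ∪ Y) := by
  obtain ⟨A, hAX, hA, hXA⟩ := hX
  obtain ⟨B, hBY, hB, hYB⟩ := hY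
  refine ⟨A ∪ B, Set.union_subset_union hAX hBY, ?_, fun hP3 => ?_⟩
  · rw [← isClique_compl] at hA hB ⊢
    exact hA.union_of_isCompleteBetween hB (hXY.mono hAX hBY)
  have hsub : (X ∪ Y) \ (A ∪ B) ⊆ X \ A ∪ Y \ B := by
    rintro x ⟨hx | hx, hAB⟩
    exacts [.inl ⟨hx, hAB ∘ .inl⟩, .inr ⟨hx, hAB ∘ .inr⟩]
  have := (containsOn_pathGraph_three_union (hXY.mono Set.sdiff_subset Set.sdiff_subset)).1
    (hP3.mono hsub)
  exact this.elim hXA hYB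

lemma not_containsOn_pathGraph_three_of_isCompleteBetween (hJ1 : ¬Contains G J1)
    (hXY : G.IsCompleteBetween X Y) (hY : ¬G.IsClique Y) : ¬ContainsOn G X (pathGraph 3) := by
  rw [containsOn_pathGraph_three_iff]
  rintro ⟨a, ha, b, hb, c, hc, hab, hbc, hac, hnac⟩
  have hC4 : ContainsOn G ({a, c} ∪ Y) (cycleGraph 4) :=
    ((containsOn_EG_two (s := {a, c}) (by simp) (by simp) hac hnac).join
      (containsOn_EG_two_of_not_isClique hY)
      (hXY.mono (by simp [Set.insert_subset_iff, ha, hc]) subset_rfl)).comp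
        cycleGraphFourIsoJoin.toEmbedding
  refine hJ1 (hC4.join (containsOn_KG_one (Set.mem_singleton b)) ?_).contains
  rintro x ((rfl | rfl) | hx) _ rfl
  exacts [hab, hbc.symm, (hXY hb hx).symm]

lemma IsJoinSplit.monopolarOn_of_not_isClique (h : IsJoinSplit G s X Y) (hJ1 : ¬Contains G J1)
    (hJ4 : ¬Contains G J4) (hX : ¬G.IsClique X) (hY : ¬G.IsClique Y) : MonopolarOn G s := by
  have hXP3 := not_containsOn_pathGraph_three_of_isCompleteBetween hJ1 h.isCompleteBetween hY
  have hYP3 := not_containsOn_pathGraph_three_of_isCompleteBetween hJ1 h.isCompleteBetween.symm hX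
  by_cases hXi : G.IsIndepSet X
  · exact ⟨X, h.left_ssubset.subset, hXi, fun h' => hYP3 (h'.mono h.sdiff_left_subset)⟩
  by_cases hYi : G.IsIndepSet Y
  · exact ⟨Y, h.right_ssubset.subset, hYi, fun h' => hXP3 (h'.mono h.symm.sdiff_left_subset)⟩
  exact absurd ((containsOn_K2uK1 hXP3 hXi hX).join (containsOn_K2uK1 hYP3 hYi hY)
    h.isCompleteBetween).contains hJ4

lemma IsJoinSplit.monopolarOn_of_isClique [Finite α] (h : IsJoinSplit G s X Y) (hG : IsCograph G)
    (hJ1 : ¬Contains G J1) (hJ2 : ¬Contains G J2) (hJ3 : ¬Contains G J3) (hX : G.IsClique X) :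
    MonopolarOn G s := by
  obtain ⟨v, hv⟩ := h.left_nonempty
  have hvY : G.IsCompleteBetween {v} Y :=
    h.isCompleteBetween.mono (Set.singleton_subset_iff.2 hv) subset_rfl
  by_cases h2K2 : ContainsOn G Y twoK2
  · obtain ⟨f, hf⟩ := h2K2
    have hYP3 : ¬ContainsOn G Y (pathGraph 3) := fun hP3 => by
      obtain ⟨t, ht, hta⟩ | hU := hG.exists_forall_adj_or_containsOn_gUnion f hf hP3
      · refine hJ3 ((containsOn_KG_two (s := {v, t}) (by simp) (by simp) (hvY rfl ht)).join
          ⟨f, subset_rfl⟩ ?_).contains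
        rintro x (rfl | rfl) _ ⟨i, rfl⟩
        exacts [hvY rfl (hf ⟨i, rfl⟩), hta i]
      · exact hJ2 ((containsOn_KG_one (Set.mem_singleton v)).join hU hvY).contains
    have hXi : G.IsIndepSet X := by
      by_contra hX'
      exact hJ3 ((containsOn_KG_two_of_not_isIndepSet hX').join ⟨f, hf⟩
        h.isCompleteBetween).contains
    exact ⟨X, h.left_ssubset.subset, hXi, fun h' => hYP3 (h'.mono h.sdiff_left_subset)⟩
  have hC4 : ¬ContainsOn G Y (cycleGraph 4) := fun hC4 =>
    hJ1 (hC4.join (containsOn_KG_one (Set.mem_singleton v)) hvY.symm).contains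
  obtain ⟨I, hIY, hI, hK⟩ := hG.exists_isIndepSet_isClique_sdiff h2K2 hC4
  have hXK : G.IsClique (X ∪ Y \ I) :=
    hX.union_of_isCompleteBetween hK (h.isCompleteBetween.mono subset_rfl Set.sdiff_subset)
  refine ⟨I, hIY.trans h.right_ssubset.subset, hI, (hXK.subset ?_).not_containsOn_pathGraph_three⟩
  rw [← h.union_eq, Set.union_sdiff_distrib]
  exact Set.union_subset_union_left _ Set.sdiff_subset

theorem IsCograph.monopolarOn [Finite α] (hG : IsCograph G) (hJ1 : ¬Contains G J1)
    (hJ2 : ¬Contains G J2) (hJ3 : ¬Contains G J3) (hJ4 : ¬Contains G J4) (s : Set α) :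
    MonopolarOn G s := by
  induction s using WellFoundedLT.induction with
  | _ s ih =>
  obtain hs | hs := s.subsingleton_or_nontrivial
  · exact ⟨∅, Set.empty_subset s, Set.pairwise_empty _,
      IsClique.not_containsOn_pathGraph_three ((hs.anti Set.sdiff_subset).pairwise _)⟩
  obtain ⟨X, Y, h | h⟩ := hG.exists_isJoinSplit hs
  · by_cases hX : G.IsClique X
    · exact h.monopolarOn_of_isClique hG hJ1 hJ2 hJ3 hX
    by_cases hY : G.IsClique Y
    · exact h.symm.monopolarOn_of_isClique hG hJ1 hJ2 hJ3 hY
    exact h.monopolarOn_of_not_isClique hJ1 hJ4 hX hY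
  · rw [← h.union_eq]
    exact (ih X h.left_ssubset).union (ih Y h.right_ssubset) h.isCompleteBetween

end

theorem stmt_5_general {α : Type*} [Fintype α] (G : SimpleGraph α) (hcog : IsCograph G) :
    Monopolar G ↔
      (¬ Contains G J1 ∧ ¬ Contains G J2 ∧ ¬ Contains G J3 ∧ ¬ Contains G J4) := by
  refine ⟨fun hG => ⟨fun h => not_monopolar_J1 (hG.of_contains h),
    fun h => not_monopolar_J2 (hG.of_contains h), fun h => not_monopolar_J3 (hG.of_contains h),
    fun h => not_monopolar_J4 (hG.of_contains h)⟩, fun ⟨hJ1, hJ2, hJ3, hJ4⟩ => ?_⟩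
  rw [monopolar_iff_monopolarOn_univ]
  exact hcog.monopolarOn hJ1 hJ2 hJ3 hJ4 Set.univ

theorem stmt_5 {α : Type*} [Fintype α] (G : SimpleGraph α) (hcog : IsCograph G)
    (hconn : G.Connected) :
    Monopolar G ↔
      (¬ Contains G J1 ∧ ¬ Contains G J2 ∧ ¬ Contains G J3 ∧ ¬ Contains G J4) :=
  stmt_5_general G hcog
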